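/- arXiv:1701.04956 — 2 statements merged into one kernel-verified Lean document; each statement's English description precedes it below -/
import Mathlib

section
/- Suppose n ≥ 3. For i, j ∈ {1,…,n}, the order of the bijection τ_i ∘ τ_j of the finite set I_n is: 1 if i = j; 2 if |i − j| ≥ 2; and 6 if |i − j| = 1. -/
/-- An independent set of the path graph `P_n` (vertices `1,…,n`, edges `{i,i+1}`):
a subset of `{1,…,n}` containing no two adjacent vertices. -/
def IndepSet (n : ℕ) (S : Finset ℕ) : Prop :=
  S ⊆ Finset.Icc 1 n ∧ ∀ i ∈ S, i + 1 ∉ S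

instance (n : ℕ) (S : Finset ℕ) : Decidable (IndepSet n S) := by
  unfold IndepSet; infer_instance

/-- The toggle `τ_i` acting on independent sets of the path graph `P_n`. -/
def toggle (n i : ℕ) (S : Finset ℕ) : Finset ℕ :=
  if i ∈ S then S.erase i
  else if IndepSet n (insert i S) then insert i S
  else S

/-- `φ = τ_n ∘ ⋯ ∘ τ_2 ∘ τ_1` (toggle at each vertex from left to right). -/
def phi (n : ℕ) (S : Finset ℕ) : Finset ℕ :=
  (List.range n).foldl (fun T k => toggle n (k + 1) T) S

/-- `φ⁻¹ = τ_1 ∘ τ_2 ∘ ⋯ ∘ τ_n` (toggle at each vertex from right to left). -/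
def phiInv (n : ℕ) (S : Finset ℕ) : Finset ℕ :=
  (List.range n).foldr (fun k T => toggle n (k + 1) T) S

/-!
Toggles are involutions on independent sets, and `τ_i` changes only the membership of `i`,
reading only that of `i - 1`, `i`, `i + 1`. Hence `τ_i` and `τ_j` commute when `|i - j| ≥ 2`, so
`(τ_i τ_j)² = 1`, while `τ_i τ_j ∅ = {i, j}`.

For `j = i + 1`, `τ_i τ_j` fixes everything outside `{i, j}` and acts on the window of membership
bits at `i - 1, i, i + 1, i + 2` by an explicit map of `Bool⁴`. On admissible windows its orbits
have sizes 1, 2 and 3; the empty window lies on a 3-cycle, and a window with exactly one outer bit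
set (such a window exists because `n ≥ 3`) lies on a 2-cycle, so the order is 6. Finally,
`τ_j τ_i` is conjugate to `τ_i τ_j` by the involution `τ_i`, so the two have the same order.
-/

open Function Set

section Periods

variable {α β : Type*}

def periodsOn (f : α → α) (s : Set α) : Set ℕ :=
  {k | 1 ≤ k ∧ ∀ x ∈ s, IsPeriodicPt f k x}

theorem periodsOn_comp_subset {f g : α → α} {s : Set α} (hg : MapsTo g s s)
    (hgg : ∀ x ∈ s, g (g x) = x) : periodsOn (f ∘ g) s ⊆ periodsOn (g ∘ f) s := by
  rintro k ⟨hk, hper⟩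
  refine ⟨hk, fun x hx => ?_⟩
  have hconj : Semiconj g (f ∘ g) (g ∘ f) := fun _ => rfl
  calc (g ∘ f)^[k] x = (g ∘ f)^[k] (g (g x)) := by rw [hgg x hx]
    _ = g ((f ∘ g)^[k] (g x)) := (hconj.iterate_right k (g x)).symm
    _ = x := by rw [hper _ (hg hx), hgg x hx]

theorem iterate_map_of_mapsTo {f : α → α} {g : β → β} {π : α → β} {s : Set α}
    (hf : MapsTo f s s) (h : ∀ x ∈ s, π (f x) = g (π x)) (k : ℕ) {x : α} (hx : x ∈ s) :
    π (f^[k] x) = g^[k] (π x) := by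
  induction k generalizing x with
  | zero => rfl
  | succ k ih => rw [iterate_succ_apply, iterate_succ_apply, ← h x hx, ih (hf hx)]

end Periods

section Toggles

variable {n i : ℕ} {S : Finset ℕ}

theorem IndepSet.mono {T : Finset ℕ} (hT : IndepSet n T) (h : S ⊆ T) : IndepSet n S :=
  ⟨h.trans hT.1, fun i hi hi1 => hT.2 i (h hi) (h hi1)⟩

theorem IndepSet.empty : IndepSet n ∅ := by
  simp [IndepSet]

theorem IndepSet.singleton (h1 : 1 ≤ i) (hn : i ≤ n) : IndepSet n {i} := by
  simp [IndepSet, h1, hn]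

theorem indepSet_insert_iff (hS : IndepSet n S) (h1 : 1 ≤ i) (hn : i ≤ n) :
    IndepSet n (insert i S) ↔ i - 1 ∉ S ∧ i + 1 ∉ S := by
  constructor
  · rintro ⟨-, hI⟩
    refine ⟨fun h => hI (i - 1) (Finset.mem_insert_of_mem h) ?_,
      fun h => hI i (Finset.mem_insert_self i S) (Finset.mem_insert_of_mem h)⟩
    rw [Nat.sub_add_cancel h1]
    exact Finset.mem_insert_self i S
  · rintro ⟨hl, hr⟩
    refine ⟨Finset.insert_subset (Finset.mem_Icc.2 ⟨h1, hn⟩) hS.1, fun a ha ha1 => ?_⟩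
    rw [Finset.mem_insert] at ha ha1
    rcases ha with rfl | ha
    · exact ha1.elim (by omega) hr
    · exact ha1.elim (fun h => hl (by rwa [← h, Nat.add_sub_cancel])) (hS.2 a ha)

theorem IndepSet.toggle (hS : IndepSet n S) : IndepSet n (toggle n i S) := by
  unfold _root_.toggle
  split_ifs with _ hI
  exacts [hS.mono (Finset.erase_subset _ _), hI, hS]

theorem toggle_toggle (hS : IndepSet n S) : toggle n i (toggle n i S) = S := by
  unfold toggle
  split_ifs <;> simp_all

theorem mem_toggle_of_ne {x : ℕ} (h : x ≠ i) : x ∈ toggle n i S ↔ x ∈ S := by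
  unfold toggle
  split_ifs <;> simp [h]

theorem mem_toggle_self (hS : IndepSet n S) (h1 : 1 ≤ i) (hn : i ≤ n) :
    i ∈ toggle n i S ↔ i ∉ S ∧ i - 1 ∉ S ∧ i + 1 ∉ S := by
  unfold toggle
  split_ifs <;> simp_all [indepSet_insert_iff hS h1 hn]

theorem toggle_comm {j : ℕ} (hS : IndepSet n S) (hi1 : 1 ≤ i) (hin : i ≤ n) (hj1 : 1 ≤ j)
    (hjn : j ≤ n) (hij : i + 2 ≤ j) :
    toggle n i (toggle n j S) = toggle n j (toggle n i S) := by
  ext x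
  rcases eq_or_ne x i with rfl | hxi
  · simp only [mem_toggle_of_ne (show x ≠ j by omega), mem_toggle_of_ne (show x - 1 ≠ j by omega),
      mem_toggle_of_ne (show x + 1 ≠ j by omega), mem_toggle_self hS.toggle hi1 hin,
      mem_toggle_self hS hi1 hin]
  rcases eq_or_ne x j with rfl | hxj
  · simp only [mem_toggle_of_ne hxi, mem_toggle_of_ne (show x - 1 ≠ i by omega),
      mem_toggle_of_ne (show x + 1 ≠ i by omega), mem_toggle_self hS.toggle hj1 hjn,
      mem_toggle_self hS hj1 hjn]
  simp only [mem_toggle_of_ne hxi, mem_toggle_of_ne hxj]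

end Toggles

section Window

variable {n d : ℕ} {S T : Finset ℕ}

def window (d : ℕ) (S : Finset ℕ) : Bool × Bool × Bool × Bool :=
  (d - 1 ∈ S, d ∈ S, d + 1 ∈ S, d + 2 ∈ S)

def toggleLeft : Bool × Bool × Bool × Bool → Bool × Bool × Bool × Bool
  | (p, a, b, q) => (p, !a && !p && !b, b, q)

def toggleRight : Bool × Bool × Bool × Bool → Bool × Bool × Bool × Bool
  | (p, a, b, q) => (p, a, !b && !a && !q, q)

def admissible : Bool × Bool × Bool × Bool → Bool
  | (p, a, b, q) => !(p && a) && !(a && b) && !(b && q)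

theorem window_toggle_left (hS : IndepSet n S) (hd : 1 ≤ d) (hdn : d ≤ n) :
    window d (toggle n d S) = toggleLeft (window d S) := by
  simp [window, toggleLeft, mem_toggle_self hS hd hdn, mem_toggle_of_ne (show d - 1 ≠ d by omega),
    mem_toggle_of_ne, Bool.and_assoc]

theorem window_toggle_right (hS : IndepSet n S) (hdn : d + 1 ≤ n) :
    window d (toggle n (d + 1) S) = toggleRight (window d S) := by
  simp [window, toggleRight, mem_toggle_self hS (Nat.le_add_left 1 d) hdn,
    mem_toggle_of_ne (show d - 1 ≠ d + 1 by omega), mem_toggle_of_ne, Bool.and_assoc]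

theorem admissible_window (hS : IndepSet n S) (hd : 1 ≤ d) : admissible (window d S) := by
  have hpa : d - 1 ∈ S → d ∉ S := by simpa [Nat.sub_add_cancel hd] using hS.2 (d - 1)
  have hab : d ∈ S → d + 1 ∉ S := hS.2 d
  have hbq : d + 1 ∈ S → d + 2 ∉ S := hS.2 (d + 1)
  simp only [window, admissible, Bool.and_eq_true, Bool.not_eq_true', Bool.and_eq_false_iff,
    decide_eq_false_iff_not]
  tauto

theorem toggle_sdiff_of_mem {i : ℕ} {U : Finset ℕ} (h : i ∈ U) : toggle n i S \ U = S \ U := by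
  ext x
  simp only [Finset.mem_sdiff]
  by_cases hx : x ∈ U
  · simp [hx]
  · rw [mem_toggle_of_ne (ne_of_mem_of_not_mem h hx).symm]

theorem eq_of_sdiff_eq_of_window_eq (h : S \ {d, d + 1} = T \ {d, d + 1})
    (hw : window d S = window d T) : S = T := by
  simp only [window, Prod.mk.injEq, decide_eq_decide] at hw
  ext x
  by_cases hx : x = d ∨ x = d + 1
  · rcases hx with rfl | rfl
    exacts [hw.2.1, hw.2.2.1]
  · simpa [hx] using Finset.ext_iff.1 h x

end Window

section TogglePeriods

variable {n d : ℕ}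

theorem mapsTo_toggle (n i : ℕ) : MapsTo (toggle n i) {S | IndepSet n S} {S | IndepSet n S} :=
  fun _ => IndepSet.toggle

theorem periodsOn_toggle_comp_comm (n i j : ℕ) :
    periodsOn (toggle n i ∘ toggle n j) {S | IndepSet n S} =
      periodsOn (toggle n j ∘ toggle n i) {S | IndepSet n S} :=
  (periodsOn_comp_subset (mapsTo_toggle n j) fun _ => toggle_toggle).antisymm
    (periodsOn_comp_subset (mapsTo_toggle n i) fun _ => toggle_toggle)

theorem isLeast_periodsOn_toggle_comp_self (n i : ℕ) :
    IsLeast (periodsOn (toggle n i ∘ toggle n i) {S | IndepSet n S}) 1 :=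
  ⟨⟨le_rfl, fun _ hS => toggle_toggle hS⟩, fun _ hk => hk.1⟩

theorem isLeast_periodsOn_toggle_comp_of_add_two_le {i j : ℕ} (hi1 : 1 ≤ i) (hin : i ≤ n)
    (hj1 : 1 ≤ j) (hjn : j ≤ n) (hij : i + 2 ≤ j) :
    IsLeast (periodsOn (toggle n i ∘ toggle n j) {S | IndepSet n S}) 2 := by
  refine ⟨⟨one_le_two, fun S hS => ?_⟩, fun k ⟨hk, hper⟩ => ?_⟩
  · show toggle n i (toggle n j (toggle n i (toggle n j S))) = S
    rw [← toggle_comm hS.toggle hi1 hin hj1 hjn hij, toggle_toggle hS (i := j), toggle_toggle hS]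
  · by_contra! hk2
    obtain rfl : k = 1 := by omega
    have hfix : (toggle n i ∘ toggle n j) ∅ = ∅ := hper ∅ IndepSet.empty
    have hi : i ∈ (toggle n i ∘ toggle n j) ∅ := by
      simp [mem_toggle_self IndepSet.empty.toggle hi1 hin, mem_toggle_of_ne, show i ≠ j by omega,
        show i - 1 ≠ j by omega, show i + 1 ≠ j by omega]
    rw [hfix] at hi
    exact Finset.notMem_empty i hi

theorem isPeriodicPt_toggle_comp_succ_iff {S : Finset ℕ} (hS : IndepSet n S) (hd : 1 ≤ d)
    (hdn : d + 1 ≤ n) (k : ℕ) :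
    IsPeriodicPt (toggle n d ∘ toggle n (d + 1)) k S ↔
      IsPeriodicPt (toggleLeft ∘ toggleRight) k (window d S) := by
  have hwindow := iterate_map_of_mapsTo ((mapsTo_toggle n d).comp (mapsTo_toggle n (d + 1)))
    (π := window d) (g := toggleLeft ∘ toggleRight)
    (fun S (hS : IndepSet n S) => by
      simp only [comp_apply]
      rw [window_toggle_left hS.toggle hd (by omega), window_toggle_right hS hdn]) k hS
  have hout : (· \ {d, d + 1}) ∘ (toggle n d ∘ toggle n (d + 1)) = (· \ {d, d + 1}) := by
    funext S
    simp [toggle_sdiff_of_mem]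
  constructor
  · intro h
    exact hwindow.symm.trans (congrArg (window d) h)
  · intro h
    refine eq_of_sdiff_eq_of_window_eq (d := d) ?_ (hwindow.trans h)
    exact congrFun (iterate_invariant hout k) S

end TogglePeriods

section Adjacent

variable {n d : ℕ}

theorem iterate_six_toggleLeft_comp_toggleRight :
    ∀ w, admissible w → (toggleLeft ∘ toggleRight)^[6] w = w := by
  decide

theorem minimalPeriod_toggleLeft_comp_toggleRight_empty :
    minimalPeriod (toggleLeft ∘ toggleRight) (false, false, false, false) = 3 :=
  minimalPeriod_eq_prime rfl (by decide)

theorem minimalPeriod_toggleLeft_comp_toggleRight_outerLeft :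
    minimalPeriod (toggleLeft ∘ toggleRight) (true, false, false, false) = 2 :=
  minimalPeriod_eq_prime rfl (by decide)

theorem minimalPeriod_toggleLeft_comp_toggleRight_outerRight :
    minimalPeriod (toggleLeft ∘ toggleRight) (false, false, false, true) = 2 :=
  minimalPeriod_eq_prime rfl (by decide)

theorem isLeast_periodsOn_toggle_comp_succ (hn : 3 ≤ n) (hd : 1 ≤ d) (hdn : d + 1 ≤ n) :
    IsLeast (periodsOn (toggle n d ∘ toggle n (d + 1)) {S | IndepSet n S}) 6 := by
  have hperiodic {S : Finset ℕ} (hS : IndepSet n S) (k : ℕ) :=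
    isPeriodicPt_toggle_comp_succ_iff hS hd hdn k
  refine ⟨⟨by norm_num, fun S hS => (hperiodic hS 6).2 ?_⟩, fun k ⟨hk, hper⟩ => ?_⟩
  · exact iterate_six_toggleLeft_comp_toggleRight _ (admissible_window hS hd)
  have h3 : 3 ∣ k := by
    rw [← minimalPeriod_toggleLeft_comp_toggleRight_empty]
    simpa [window] using ((hperiodic IndepSet.empty k).1 (hper ∅ IndepSet.empty)).minimalPeriod_dvd
  have h2 : 2 ∣ k := by
    obtain ⟨W, hW, hWper⟩ : ∃ W, IndepSet n W ∧
        minimalPeriod (toggleLeft ∘ toggleRight) (window d W) = 2 := by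
      rcases Nat.lt_or_ge 1 d with h | h
      · refine ⟨{d - 1}, IndepSet.singleton (by omega) (by omega), ?_⟩
        convert minimalPeriod_toggleLeft_comp_toggleRight_outerLeft using 2
        simp only [window, Finset.mem_singleton, decide_true, Prod.mk.injEq,
          decide_eq_false_iff_not, true_and]
        omega
      · obtain rfl : d = 1 := by omega
        exact ⟨{3}, IndepSet.singleton (by norm_num) hn,
          minimalPeriod_toggleLeft_comp_toggleRight_outerRight⟩
    rw [← hWper]
    exact ((hperiodic hW k).1 (hper W hW)).minimalPeriod_dvd
  omega

end Adjacent

/-- For `n ≥ 3`, the order of the bijection `τ_i ∘ τ_j` of `I_n` is 1 if `i = j`,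
2 if `|i − j| ≥ 2`, and 6 if `|i − j| = 1`. -/
theorem stmt5 (n : ℕ) (hn : 3 ≤ n) (i j : ℕ) (hi1 : 1 ≤ i) (hin : i ≤ n)
    (hj1 : 1 ≤ j) (hjn : j ≤ n) :
    (i = j → IsLeast
      {k : ℕ | 1 ≤ k ∧ ∀ S : Finset ℕ, IndepSet n S →
        (toggle n i ∘ toggle n j)^[k] S = S} 1)
    ∧ (2 ≤ |(i : ℤ) - (j : ℤ)| → IsLeast
      {k : ℕ | 1 ≤ k ∧ ∀ S : Finset ℕ, IndepSet n S →
        (toggle n i ∘ toggle n j)^[k] S = S} 2)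
    ∧ (|(i : ℤ) - (j : ℤ)| = 1 → IsLeast
      {k : ℕ | 1 ≤ k ∧ ∀ S : Finset ℕ, IndepSet n S →
        (toggle n i ∘ toggle n j)^[k] S = S} 6) := by
  change (i = j → IsLeast (periodsOn (toggle n i ∘ toggle n j) {S | IndepSet n S}) 1) ∧
    (2 ≤ |(i : ℤ) - (j : ℤ)| → IsLeast (periodsOn (toggle n i ∘ toggle n j) {S | IndepSet n S}) 2) ∧
    (|(i : ℤ) - (j : ℤ)| = 1 → IsLeast (periodsOn (toggle n i ∘ toggle n j) {S | IndepSet n S}) 6)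
  refine ⟨?_, fun h => ?_, fun h => ?_⟩
  · rintro rfl
    exact isLeast_periodsOn_toggle_comp_self n i
  · rcases le_abs'.1 h with h | h
    · exact isLeast_periodsOn_toggle_comp_of_add_two_le hi1 hin hj1 hjn (by omega)
    · rw [periodsOn_toggle_comp_comm]
      exact isLeast_periodsOn_toggle_comp_of_add_two_le hj1 hjn hi1 hin (by omega)
  · rcases (abs_eq zero_le_one).1 h with h | h
    · obtain rfl : i = j + 1 := by omega
      rw [periodsOn_toggle_comp_comm]
      exact isLeast_periodsOn_toggle_comp_succ hn hj1 hin
    · obtain rfl : j = i + 1 := by omega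
      exact isLeast_periodsOn_toggle_comp_succ hn hi1 hjn
end

section
/- Let S ∈ I_n and j ∈ {1,…,n}, and suppose j ∈ S and j−2 ∈ φ^2(S). Then: (1) if j+2 ∈ S, then j ∈ φ^2(S); (2) if j+1 ∈ φ(S), then j−1 ∈ φ^3(S); (3) if j = n, then n ∈ φ^2(S). -/
/- ### Auxiliary lemmas -/

lemma indep_mono {n : ℕ} {S T : Finset ℕ} (hsub : T ⊆ S) (h : IndepSet n S) :
    IndepSet n T :=
  ⟨hsub.trans h.1, fun i hi hi1 => h.2 i (hsub hi) (hsub hi1)⟩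

lemma mem_toggle_ne {n m i : ℕ} (h : i ≠ m) (T : Finset ℕ) :
    i ∈ toggle n m T ↔ i ∈ T := by
  unfold toggle
  split_ifs <;> simp [h]

lemma mem_toggle_self_s11 (n m : ℕ) (T : Finset ℕ) :
    m ∈ toggle n m T ↔ m ∉ T ∧ IndepSet n (insert m T) := by
  unfold toggle
  split_ifs with h1 h2
  · simp [h1]
  · simp [h1, h2]
  · simp [h1, h2]

lemma toggle_indep (n m : ℕ) (T : Finset ℕ) (h : IndepSet n T) :
    IndepSet n (toggle n m T) := by
  unfold toggle
  split_ifs with h1 h2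
  · exact indep_mono (Finset.erase_subset _ _) h
  · exact h2
  · exact h

lemma indep_insert_iff (n m : ℕ) (T : Finset ℕ) (hT : IndepSet n T) (hm : 1 ≤ m) :
    IndepSet n (insert m T) ↔ m ≤ n ∧ m - 1 ∉ T ∧ m + 1 ∉ T := by
  obtain ⟨hsub, hadj⟩ := hT
  constructor
  · rintro ⟨hsub', hadj'⟩
    have h1 : m ∈ Finset.Icc 1 n := hsub' (Finset.mem_insert_self m T)
    rw [Finset.mem_Icc] at h1
    refine ⟨h1.2, fun hc => ?_, fun hc =>
      hadj' m (Finset.mem_insert_self m T) (Finset.mem_insert_of_mem hc)⟩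
    have h2 := hadj' (m - 1) (Finset.mem_insert_of_mem hc)
    rw [Nat.sub_add_cancel hm] at h2
    exact h2 (Finset.mem_insert_self m T)
  · rintro ⟨h1, h2, h3⟩
    refine ⟨?_, ?_⟩
    · intro x hx
      rcases Finset.mem_insert.mp hx with rfl | hx
      · exact Finset.mem_Icc.mpr ⟨hm, h1⟩
      · exact hsub hx
    · intro x hx hx1
      rcases Finset.mem_insert.mp hx with rfl | hx
      · rcases Finset.mem_insert.mp hx1 with h | h
        · omega
        · exact h3 h
      · rcases Finset.mem_insert.mp hx1 with h | h
        · have hx' : x = m - 1 := by omega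
          exact h2 (hx' ▸ hx)
        · exact hadj x hx h

/-- Partial left-to-right sweep: toggles at `1, …, k`. -/
def phiA (n k : ℕ) (S : Finset ℕ) : Finset ℕ :=
  (List.range k).foldl (fun T m => toggle n (m + 1) T) S

lemma phiA_succ (n k : ℕ) (S : Finset ℕ) :
    phiA n (k + 1) S = toggle n (k + 1) (phiA n k S) := by
  simp [phiA, List.range_succ]

lemma phi_eq_phiA (n : ℕ) (S : Finset ℕ) : phi n S = phiA n n S := rfl

lemma phiA_indep (n : ℕ) {S : Finset ℕ} (h : IndepSet n S) (k : ℕ) :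
    IndepSet n (phiA n k S) := by
  induction k with
  | zero => exact h
  | succ k ih => rw [phiA_succ]; exact toggle_indep n (k + 1) _ ih

lemma phi_indep (n : ℕ) {S : Finset ℕ} (h : IndepSet n S) : IndepSet n (phi n S) := by
  rw [phi_eq_phiA]; exact phiA_indep n h n

lemma mem_phiA_of_gt (n : ℕ) (S : Finset ℕ) (i : ℕ) :
    ∀ k, k < i → (i ∈ phiA n k S ↔ i ∈ S) := by
  intro k
  induction k with
  | zero => intro _; exact Iff.rfl
  | succ k ih =>
    intro hk
    rw [phiA_succ, mem_toggle_ne (by omega), ih (by omega)]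

lemma mem_phiA_stable (n : ℕ) (S : Finset ℕ) {i k : ℕ} (hik : i ≤ k) :
    ∀ l, k ≤ l → (i ∈ phiA n l S ↔ i ∈ phiA n k S) := by
  refine Nat.le_induction Iff.rfl (fun l hl ih => ?_)
  rw [phiA_succ, mem_toggle_ne (by omega), ih]

/-- The key local characterization of membership in `φ(S)`. -/
lemma mem_phi_iff (n : ℕ) {S : Finset ℕ} (hS : IndepSet n S) {i : ℕ}
    (hi1 : 1 ≤ i) (hi2 : i ≤ n) :
    i ∈ phi n S ↔ i ∉ S ∧ i + 1 ∉ S ∧ i - 1 ∉ phi n S := by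
  have hk : i - 1 + 1 = i := Nat.sub_add_cancel hi1
  have h0 : i ∈ phi n S ↔ i ∈ phiA n i S := by
    rw [phi_eq_phiA]
    exact mem_phiA_stable n S le_rfl n hi2
  have hstep : phiA n i S = toggle n i (phiA n (i - 1) S) := by
    conv_lhs => rw [← hk]
    rw [phiA_succ, hk]
  have hT : IndepSet n (phiA n (i - 1) S) := phiA_indep n hS (i - 1)
  have hiT : i ∈ phiA n (i - 1) S ↔ i ∈ S := mem_phiA_of_gt n S i (i - 1) (by omega)
  have hi1T : i + 1 ∈ phiA n (i - 1) S ↔ i + 1 ∈ S :=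
    mem_phiA_of_gt n S (i + 1) (i - 1) (by omega)
  have him : i - 1 ∈ phiA n (i - 1) S ↔ i - 1 ∈ phi n S := by
    rw [phi_eq_phiA]
    exact (mem_phiA_stable n S le_rfl n (by omega)).symm
  rw [h0, hstep, mem_toggle_self_s11, indep_insert_iff n i _ hT hi1]
  simp only [hiT, hi1T, him]
  constructor
  · rintro ⟨a, _, b, c⟩; exact ⟨a, c, b⟩
  · rintro ⟨a, c, b⟩; exact ⟨a, hi2, b, c⟩

/-- Suppose `j ∈ S` and `j−2 ∈ φ²(S)`. Then: (1) if `j+2 ∈ S` then `j ∈ φ²(S)`;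
(2) if `j+1 ∈ φ(S)` then `j−1 ∈ φ³(S)`; (3) if `j = n` then `n ∈ φ²(S)`. -/
theorem stmt11 (n : ℕ) (hn : 2 ≤ n) (S : Finset ℕ) (hS : IndepSet n S)
    (j : ℕ) (hj1 : 1 ≤ j) (hjn : j ≤ n) (hjS : j ∈ S)
    (h2 : j - 2 ∈ (phi n)^[2] S) :
    (j + 2 ∈ S → j ∈ (phi n)^[2] S)
    ∧ (j + 1 ∈ phi n S → j - 1 ∈ (phi n)^[3] S)
    ∧ (j = n → n ∈ (phi n)^[2] S) := by
  have hB : IndepSet n (phi n S) := phi_indep n hS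
  have hC : IndepSet n (phi n (phi n S)) := phi_indep n hB
  have h2' : (phi n)^[2] S = phi n (phi n S) := rfl
  have h3' : (phi n)^[3] S = phi n (phi n (phi n S)) := rfl
  rw [h2'] at h2
  -- bounds: j ≥ 3
  have hj3 : 3 ≤ j := by
    have := Finset.mem_Icc.mp (hC.1 h2)
    omega
  have e1 : j - 2 + 1 = j - 1 := by omega
  have e2 : j - 1 + 1 = j := by omega
  have e3 : j - 1 - 1 = j - 2 := by omega
  -- consequences of j - 2 ∈ φ²(S)
  have hc2 := (mem_phi_iff n hB (i := j - 2) (by omega) (by omega)).mp h2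
  rw [e1] at hc2
  -- hc2 : j - 2 ∉ φ(S) ∧ j - 1 ∉ φ(S) ∧ ...
  have hjB : j ∉ phi n S := fun h =>
    ((mem_phi_iff n hS hj1 hjn).mp h).1 hjS
  have hj1C : j - 1 ∉ phi n (phi n S) := fun h => by
    have := ((mem_phi_iff n hB (i := j - 1) (by omega) (by omega)).mp h).2.2
    rw [e3] at this
    exact this h2
  refine ⟨?_, ?_, ?_⟩
  · -- (1)
    intro hj2S
    have hj2n : j + 2 ≤ n := by
      have := Finset.mem_Icc.mp (hS.1 hj2S)
      omega
    have hj1B : j + 1 ∉ phi n S := fun h =>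
      ((mem_phi_iff n hS (i := j + 1) (by omega) (by omega)).mp h).2.1 hj2S
    rw [h2']
    exact (mem_phi_iff n hB hj1 hjn).mpr ⟨hjB, hj1B, hj1C⟩
  · -- (2)
    intro hj1B
    have hjC : j ∉ phi n (phi n S) := fun h =>
      ((mem_phi_iff n hB hj1 hjn).mp h).2.1 hj1B
    have hj2D : j - 2 ∉ phi n (phi n (phi n S)) := fun h =>
      ((mem_phi_iff n hC (i := j - 2) (by omega) (by omega)).mp h).1 h2
    rw [h3']
    refine (mem_phi_iff n hC (i := j - 1) (by omega) (by omega)).mpr ?_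
    rw [e2, e3]
    exact ⟨hj1C, hjC, hj2D⟩
  · -- (3)
    intro hjeq
    have hn1B : j + 1 ∉ phi n S := fun h => by
      have := Finset.mem_Icc.mp (hB.1 h)
      omega
    rw [h2']
    exact hjeq ▸ (mem_phi_iff n hB hj1 hjn).mpr ⟨hjB, hn1B, hj1C⟩
end
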